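/- Let Ω ⊂ ℝ² be a bounded measurable set with |Ω| > 0 and let Λ be a spectrum of Ω contained in a lattice L ⊂ ℝ². Then the covolume of L is at most 1/|Ω|. -/

import Mathlib

/-!
Let `L = T ℤᵈ` and let `Γ = T⁻ᵀ ℤᵈ` be its dual lattice, whose fundamental parallelepiped has
volume `|det T|⁻¹`; every exponential `e_λ`, `λ ∈ L`, is `Γ`-periodic. If `|Ω| > |det T|⁻¹`, a
measure-theoretic form of Blichfeldt's principle gives `A ⊆ Ω` of positive measure and `γ ∈ Γ`
with `γ + A ⊆ Ω` almost disjoint from `A`. Periodicity makes `1_A - 1_{γ + A}` orthogonal in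
`L²(Ω)` to every `e_λ`, contradicting the completeness of the exponential system.
-/

open MeasureTheory Real Complex
open scoped RealInnerProductSpace

/-- The Fourier transform of the indicator function of `Ω` at frequency `ξ`:
`∫_Ω e^{-2πi ξ·x} dx`. -/
noncomputable def fourierInd {d : ℕ} (Ω : Set (EuclideanSpace ℝ (Fin d)))
    (ξ : EuclideanSpace ℝ (Fin d)) : ℂ :=
  ∫ x in Ω, Complex.exp (-(2 * Real.pi * Complex.I * ((⟪ξ, x⟫ : ℝ) : ℂ)))

/-- `Λ` is a spectrum of `Ω`: the exponentials `e^{2πi x·λ}`, `λ ∈ Λ`, are pairwise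
orthogonal in `L²(Ω)` and their span is complete (any `L²(Ω)` function orthogonal to
all of them vanishes a.e.). -/
def IsSpectrum {d : ℕ} (Ω Λ : Set (EuclideanSpace ℝ (Fin d))) : Prop :=
  (∀ lam ∈ Λ, ∀ mu ∈ Λ, lam ≠ mu →
    ∫ x in Ω, Complex.exp (2 * Real.pi * Complex.I * ((⟪x, lam⟫ : ℝ) : ℂ)) *
      (starRingEnd ℂ) (Complex.exp (2 * Real.pi * Complex.I * ((⟪x, mu⟫ : ℝ) : ℂ))) = 0) ∧
  (∀ f : EuclideanSpace ℝ (Fin d) → ℂ, MemLp f 2 (volume.restrict Ω) →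
    (∀ lam ∈ Λ, ∫ x in Ω,
      f x * (starRingEnd ℂ) (Complex.exp (2 * Real.pi * Complex.I * ((⟪x, lam⟫ : ℝ) : ℂ))) = 0) →
    f =ᵐ[volume.restrict Ω] 0)

open scoped Pointwise

theorem MeasureTheory.IsAddFundamentalDomain.exists_aedisjoint_vadd_subset {G α : Type*}
    [AddGroup G] [Countable G] [AddAction G α] [MeasurableSpace α] [MeasurableSpace G]
    [MeasurableVAdd G α] {μ : Measure α} [VAddInvariantMeasure G α μ] {D Ω : Set α}
    (hD : IsAddFundamentalDomain G D μ) (hDm : MeasurableSet D) (hΩ : MeasurableSet Ω)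
    (hlt : μ D < μ Ω) :
    ∃ g : G, ∃ A ⊆ Ω, MeasurableSet A ∧ 0 < μ A ∧ μ A < ⊤ ∧ g +ᵥ A ⊆ Ω ∧
      AEDisjoint μ A (g +ᵥ A) := by
  obtain ⟨g₁, g₂, hne, hoverlap⟩ : ∃ g₁ g₂ : G, g₁ ≠ g₂ ∧
      ¬AEDisjoint μ ((g₁ +ᵥ Ω) ∩ D) ((g₂ +ᵥ Ω) ∩ D) := by
    by_contra! h
    exact hlt.not_ge (hD.measure_le_of_pairwise_disjoint hΩ.nullMeasurableSet h)
  set F := ((g₁ +ᵥ Ω) ∩ D) ∩ ((g₂ +ᵥ Ω) ∩ D)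
  have hF₁ : F ⊆ (g₁ +ᵥ Ω) ∩ D := Set.inter_subset_left
  have hF₂ : F ⊆ (g₂ +ᵥ Ω) ∩ D := Set.inter_subset_right
  have hshift : (-g₂ + g₁) +ᵥ (-g₁ +ᵥ F) = -g₂ +ᵥ F := by
    rw [add_vadd, vadd_neg_vadd]
  have hμF : μ (-g₁ +ᵥ F) = μ F := measure_vadd _ _ _
  refine ⟨-g₂ + g₁, -g₁ +ᵥ F, ?_, ?_, ?_, ?_, ?_, ?_⟩
  · simpa using Set.vadd_set_mono (a := -g₁) (hF₁.trans Set.inter_subset_left)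
  · exact (((hΩ.const_vadd g₁).inter hDm).inter ((hΩ.const_vadd g₂).inter hDm)).const_vadd _
  · exact hμF ▸ pos_iff_ne_zero.mpr hoverlap
  · calc μ (-g₁ +ᵥ F) = μ F := hμF
      _ ≤ μ D := measure_mono (hF₁.trans Set.inter_subset_right)
      _ < μ Ω := hlt
      _ ≤ ⊤ := le_top
  · simpa [hshift] using Set.vadd_set_mono (a := -g₂) (hF₂.trans Set.inter_subset_left)
  · rw [hshift]
    exact (hD.aedisjoint (neg_injective.ne hne)).mono
      (Set.vadd_set_mono (hF₁.trans Set.inter_subset_right))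
      (Set.vadd_set_mono (hF₂.trans Set.inter_subset_right))

section Translation
variable {α : Type*} [MeasurableSpace α] [AddCommGroup α] [MeasurableAdd α] {μ : Measure α}
  [μ.IsAddLeftInvariant]

theorem setIntegral_vadd_eq_of_periodic {F : Type*} [NormedAddCommGroup F] [NormedSpace ℝ F]
    {g : α → F} {c : α} (hg : Function.Periodic g c) (A : Set α) :
    ∫ x in c +ᵥ A, g x ∂μ = ∫ x in A, g x ∂μ := by
  rw [← Set.image_vadd]
  simp_rw [vadd_eq_add]
  rw [(measurePreserving_add_left μ c).setIntegral_image_emb (measurableEmbedding_addLeft c)]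
  simp_rw [add_comm c]
  exact integral_congr_ae (.of_forall hg)

theorem integral_indicator_sub_indicator_vadd_mul_eq_zero {g : α → ℂ} {c : α}
    (hg : Function.Periodic g c) {Ω A : Set α} (hA : MeasurableSet A)
    (hAΩ : A ⊆ Ω) (hcAΩ : c +ᵥ A ⊆ Ω) (hgA : IntegrableOn g A μ)
    (hgcA : IntegrableOn g (c +ᵥ A) μ) :
    ∫ x in Ω, (A.indicator 1 - (c +ᵥ A).indicator 1 : α → ℂ) x * g x ∂μ = 0 := by
  have hcA : MeasurableSet (c +ᵥ A) := hA.const_vadd c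
  calc ∫ x in Ω, (A.indicator 1 - (c +ᵥ A).indicator 1 : α → ℂ) x * g x ∂μ
      = ∫ x in Ω, (A.indicator g x - (c +ᵥ A).indicator g x) ∂μ := by
        congr 1 with x
        simp only [Pi.sub_apply, sub_mul, ← Set.indicator_mul_left, Pi.one_apply, one_mul]
    _ = (∫ x in A, g x ∂μ) - ∫ x in c +ᵥ A, g x ∂μ := by
        rw [integral_sub (hgA.integrable_indicator hA).restrict
          (hgcA.integrable_indicator hcA).restrict, setIntegral_indicator hA,
          setIntegral_indicator hcA, Set.inter_eq_right.mpr hAΩ, Set.inter_eq_right.mpr hcAΩ]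
    _ = 0 := by rw [setIntegral_vadd_eq_of_periodic hg, sub_self]

end Translation

theorem measure_eq_zero_of_indicator_sub_indicator_ae_eq_zero {α M : Type*} [MeasurableSpace α]
    [AddGroupWithOne M] [NeZero (1 : M)] {μ : Measure α} {Ω A B : Set α} (hAΩ : A ⊆ Ω)
    (hAB : AEDisjoint μ A B) (h : (A.indicator 1 - B.indicator 1 : α → M) =ᵐ[μ.restrict Ω] 0) :
    μ A = 0 := by
  have hsub : A \ B ⊆ {x | (A.indicator 1 - B.indicator 1 : α → M) x ≠ 0} := by
    intro x ⟨hxA, hxB⟩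
    simp [Set.indicator_of_mem hxA, Set.indicator_of_notMem hxB]
  rw [← hAB.measure_sdiff_left, ← Measure.restrict_eq_self (μ := μ) (Set.sdiff_subset.trans hAΩ)]
  exact measure_mono_null hsub (ae_iff.mp h)

theorem Function.periodic_exp_two_pi_I_inner {E : Type*} [NormedAddCommGroup E]
    [InnerProductSpace ℝ E] {c lam : E} {k : ℤ} (hk : ⟪c, lam⟫ = k) :
    Function.Periodic (fun x : E => Complex.exp (2 * π * I * ((⟪x, lam⟫ : ℝ) : ℂ))) c := by
  intro x
  simp only [inner_add_left, hk, ofReal_add, ofReal_intCast, mul_add, Complex.exp_add]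
  rw [show 2 * (π : ℂ) * I * k = k * (2 * π * I) by ring, Complex.exp_int_mul_two_pi_mul_I, mul_one]

theorem integrableOn_conj_exp_two_pi_I_inner {E : Type*} [NormedAddCommGroup E]
    [InnerProductSpace ℝ E] [MeasurableSpace E] [OpensMeasurableSpace E] {μ : Measure E}
    {s : Set E} (hs : μ s ≠ ⊤) (lam : E) :
    IntegrableOn
      (fun x => (starRingEnd ℂ) (Complex.exp (2 * π * I * ((⟪x, lam⟫ : ℝ) : ℂ)))) s μ := by
  refine Measure.integrableOn_of_bounded hs (Continuous.aestronglyMeasurable (by fun_prop))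
    (M := 1) (ae_of_all _ fun x => ?_)
  simp [Complex.norm_exp]

theorem IsSpectrum.volume_le_of_isAddFundamentalDomain {d : ℕ}
    {Ω Λ D : Set (EuclideanSpace ℝ (Fin d))} (hΛ : IsSpectrum Ω Λ) (hΩ : MeasurableSet Ω)
    {Γ : AddSubgroup (EuclideanSpace ℝ (Fin d))} [Countable Γ]
    (hD : IsAddFundamentalDomain Γ D) (hDm : MeasurableSet D)
    (hdual : ∀ γ ∈ Γ, ∀ lam ∈ Λ, ∃ k : ℤ, ⟪γ, lam⟫ = k) : volume Ω ≤ volume D := by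
  by_contra! hlt
  obtain ⟨γ, A, hAΩ, hA, hA0, hAfin, hγAΩ, hdisj⟩ :=
    hD.exists_aedisjoint_vadd_subset hDm hΩ hlt
  set B := (γ : EuclideanSpace ℝ (Fin d)) +ᵥ A
  have hBfin : volume B < ⊤ := by rwa [measure_vadd]
  have hmem : MemLp (A.indicator 1 - B.indicator 1 : _ → ℂ) 2 (volume.restrict Ω) :=
    (memLp_indicator_const 2 hA 1 (.inr ((Measure.restrict_apply_le _ _).trans_lt hAfin).ne)).sub
      (memLp_indicator_const 2 (hA.const_vadd _) 1
        (.inr ((Measure.restrict_apply_le _ _).trans_lt hBfin).ne))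
  have horth : ∀ lam ∈ Λ, ∫ x in Ω, (A.indicator 1 - B.indicator 1 : _ → ℂ) x *
      (starRingEnd ℂ) (Complex.exp (2 * π * I * ((⟪x, lam⟫ : ℝ) : ℂ))) = 0 := by
    intro lam hlam
    obtain ⟨k, hk⟩ := hdual γ γ.2 lam hlam
    exact integral_indicator_sub_indicator_vadd_mul_eq_zero
      ((Function.periodic_exp_two_pi_I_inner hk).comp _) hA hAΩ hγAΩ
      (integrableOn_conj_exp_two_pi_I_inner hAfin.ne lam)
      (integrableOn_conj_exp_two_pi_I_inner hBfin.ne lam)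
  exact hA0.ne' (measure_eq_zero_of_indicator_sub_indicator_ae_eq_zero hAΩ hdisj
    (hΛ.2 _ hmem horth))

theorem LinearMap.det_adjoint {𝕜 E : Type*} [RCLike 𝕜] [NormedAddCommGroup E]
    [InnerProductSpace 𝕜 E] [FiniteDimensional 𝕜 E] (f : E →ₗ[𝕜] E) :
    LinearMap.det (LinearMap.adjoint f) = star (LinearMap.det f) := by
  let b := stdOrthonormalBasis 𝕜 E
  rw [← LinearMap.det_toMatrix b.toBasis, LinearMap.toMatrix_adjoint b b,
    Matrix.det_conjTranspose, LinearMap.det_toMatrix]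

section Contragredient
variable {E : Type*} [NormedAddCommGroup E] [InnerProductSpace ℝ E] [FiniteDimensional ℝ E]

noncomputable def LinearEquiv.contragredient (T : E ≃ₗ[ℝ] E) : E ≃ₗ[ℝ] E :=
  LinearEquiv.ofLinearMap (f := LinearMap.adjoint (T.symm : E →ₗ[ℝ] E))
    (g := LinearMap.adjoint (T : E →ₗ[ℝ] E))
    (by rw [← LinearMap.adjoint_comp]; simp)
    (by rw [← LinearMap.adjoint_comp]; simp)

theorem LinearEquiv.inner_contragredient_apply (T : E ≃ₗ[ℝ] E) (x y : E) :
    ⟪T.contragredient x, T y⟫ = ⟪x, y⟫ := by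
  simp [contragredient, LinearMap.adjoint_inner_left]

theorem LinearEquiv.det_contragredient (T : E ≃ₗ[ℝ] E) :
    LinearMap.det (T.contragredient : E →ₗ[ℝ] E) = (LinearMap.det (T : E →ₗ[ℝ] E))⁻¹ := by
  change LinearMap.det (LinearMap.adjoint (T.symm : E →ₗ[ℝ] E)) = _
  rw [LinearMap.det_adjoint, star_trivial, LinearEquiv.det_coe_symm]

end Contragredient

theorem OrthonormalBasis.volume_fundamentalDomain_map {E ι : Type*} [NormedAddCommGroup E]
    [InnerProductSpace ℝ E] [FiniteDimensional ℝ E] [MeasurableSpace E] [BorelSpace E]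
    [Fintype ι] (b : OrthonormalBasis ι ℝ E) (f : E ≃ₗ[ℝ] E) :
    volume (ZSpan.fundamentalDomain (b.toBasis.map f)) =
      ENNReal.ofReal |LinearMap.det (f : E →ₗ[ℝ] E)| := by
  rw [← ZSpan.map_fundamentalDomain, ← LinearEquiv.coe_coe, Measure.addHaar_image_linearMap,
    measure_congr (ZSpan.fundamentalDomain_ae_parallelepiped b.toBasis volume),
    OrthonormalBasis.coe_toBasis, b.volume_parallelepiped, mul_one]

theorem exists_int_inner_of_mem_span_contragredient {d : ℕ}
    (T : EuclideanSpace ℝ (Fin d) ≃ₗ[ℝ] EuclideanSpace ℝ (Fin d)) {γ : EuclideanSpace ℝ (Fin d)}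
    (hγ : γ ∈ Submodule.span ℤ
      (Set.range ((EuclideanSpace.basisFun (Fin d) ℝ).toBasis.map T.contragredient)))
    {v : EuclideanSpace ℝ (Fin d)} (hv : ∀ i, ∃ m : ℤ, v i = m) : ∃ k : ℤ, ⟪γ, T v⟫ = k := by
  induction hγ using Submodule.span_induction with
  | mem x hx =>
    obtain ⟨i, rfl⟩ := hx
    simpa [LinearEquiv.inner_contragredient_apply, EuclideanSpace.inner_single_left] using hv i
  | zero => exact ⟨0, by simp⟩
  | add x y _ _ hx hy =>
    obtain ⟨a, ha⟩ := hx
    obtain ⟨b, hb⟩ := hy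
    exact ⟨a + b, by rw [inner_add_left, ha, hb, Int.cast_add]⟩
  | smul n x _ hx =>
    obtain ⟨a, ha⟩ := hx
    exact ⟨n * a, by rw [← Int.cast_smul_eq_zsmul ℝ, real_inner_smul_left, ha, Int.cast_mul]⟩

theorem IsSpectrum.volume_le_inv_abs_det {d : ℕ} {Ω Λ : Set (EuclideanSpace ℝ (Fin d))}
    (hΛ : IsSpectrum Ω Λ) (hΩ : MeasurableSet Ω)
    (T : EuclideanSpace ℝ (Fin d) ≃ₗ[ℝ] EuclideanSpace ℝ (Fin d))
    (hΛL : Λ ⊆ T '' {v | ∀ i, ∃ m : ℤ, v i = (m : ℝ)}) :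
    volume Ω ≤ ENNReal.ofReal
      |LinearMap.det (T : EuclideanSpace ℝ (Fin d) →ₗ[ℝ] EuclideanSpace ℝ (Fin d))|⁻¹ := by
  set b := (EuclideanSpace.basisFun (Fin d) ℝ).toBasis.map T.contragredient
  have : Countable (Submodule.span ℤ (Set.range b)).toAddSubgroup :=
    inferInstanceAs (Countable (Submodule.span ℤ (Set.range b)))
  calc volume Ω ≤ volume (ZSpan.fundamentalDomain b) := by
        refine hΛ.volume_le_of_isAddFundamentalDomain hΩ (ZSpan.isAddFundamentalDomain' b volume)
          (ZSpan.fundamentalDomain_measurableSet b) ?_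
        rintro γ hγ _ hlam
        obtain ⟨v, hv, rfl⟩ := hΛL hlam
        exact exists_int_inner_of_mem_span_contragredient T hγ hv
    _ = _ := by
        rw [OrthonormalBasis.volume_fundamentalDomain_map, LinearEquiv.det_contragredient, abs_inv]

theorem spectrum_in_lattice_covolume_bound_general
    (Ω : Set (EuclideanSpace ℝ (Fin 2)))
    (hΩmeas : MeasurableSet Ω)
    (hΩpos : 0 < volume Ω)
    (T : EuclideanSpace ℝ (Fin 2) ≃ₗ[ℝ] EuclideanSpace ℝ (Fin 2))
    (Λ : Set (EuclideanSpace ℝ (Fin 2))) (hΛ : IsSpectrum Ω Λ)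
    (hΛL : Λ ⊆ T '' {v : EuclideanSpace ℝ (Fin 2) | ∀ i, ∃ m : ℤ, v i = (m : ℝ)}) :
    |LinearMap.det (T : EuclideanSpace ℝ (Fin 2) →ₗ[ℝ] EuclideanSpace ℝ (Fin 2))| ≤
      1 / (volume Ω).toReal := by
  have hle := hΛ.volume_le_inv_abs_det hΩmeas T hΛL
  have hdet := abs_pos.mpr (LinearEquiv.isUnit_det' T).ne_zero
  have hvol : 0 < (volume Ω).toReal :=
    ENNReal.toReal_pos hΩpos.ne' (ne_top_of_le_ne_top ENNReal.ofReal_ne_top hle)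
  rw [le_one_div hdet hvol, one_div]
  exact ENNReal.toReal_le_of_le_ofReal (by positivity) hle

theorem spectrum_in_lattice_covolume_bound
    (Ω : Set (EuclideanSpace ℝ (Fin 2)))
    (hΩmeas : MeasurableSet Ω) (hΩbdd : Bornology.IsBounded Ω)
    (hΩpos : 0 < volume Ω)
    (T : EuclideanSpace ℝ (Fin 2) ≃ₗ[ℝ] EuclideanSpace ℝ (Fin 2))
    (Λ : Set (EuclideanSpace ℝ (Fin 2))) (hΛ : IsSpectrum Ω Λ)
    (hΛL : Λ ⊆ T '' {v : EuclideanSpace ℝ (Fin 2) | ∀ i, ∃ m : ℤ, v i = (m : ℝ)}) :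
    |LinearMap.det (T : EuclideanSpace ℝ (Fin 2) →ₗ[ℝ] EuclideanSpace ℝ (Fin 2))| ≤
      1 / (volume Ω).toReal :=
  spectrum_in_lattice_covolume_bound_general Ω hΩmeas hΩpos T Λ hΛ hΛL
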